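/- arXiv:2110.01929 — 5 statements merged into one kernel-verified Lean document; each statement's English description precedes it below -/
import Mathlib

section
/- Let α, ω : ℝ → ℝ, f > 0, Ω ∈ ℝ, and let ρ₀ > 0. There exists ψ₀ ∈ ℝ such that (ρ₀, ψ₀) is an equilibrium of the co-rotating forced normal form if and only if f² ≥ α(ρ₀)²·ρ₀² and either Ω = ω(ρ₀) + √(f²/ρ₀² − α(ρ₀)²) or Ω = ω(ρ₀) − √(f²/ρ₀² − α(ρ₀)²). Moreover, every such ψ₀ satisfies sin ψ₀ = α(ρ₀)·ρ₀ / f. (These relations are the closed-form frequency response curve parametrized by the amplitude ρ₀.) -/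
/-!
The first equilibrium equation fixes `sin ψ₀ = α(ρ₀) ρ₀ / f` and the second fixes
`cos ψ₀ = (Ω - ω(ρ₀)) ρ₀ / f`. Such a phase exists exactly when these two numbers lie on the
unit circle, i.e. when `α(ρ₀)² ρ₀² + (Ω - ω(ρ₀))² ρ₀² = f²`; solving this for `Ω` gives the two
branches of the frequency response curve, which are real precisely when `α(ρ₀)² ρ₀² ≤ f²`.
-/

open Real

lemma exists_sin_cos_eq_iff {x y : ℝ} :
    (∃ ψ : ℝ, sin ψ = x ∧ cos ψ = y) ↔ x ^ 2 + y ^ 2 = 1 := by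
  refine ⟨fun ⟨ψ, hs, hc⟩ => hs ▸ hc ▸ sin_sq_add_cos_sq ψ, fun h => ?_⟩
  have hy1 : -1 ≤ y := by nlinarith [sq_nonneg x]
  have hy2 : y ≤ 1 := by nlinarith [sq_nonneg x]
  have hs : sin (arccos y) = |x| := by
    rw [sin_arccos, show 1 - y ^ 2 = x ^ 2 by linarith, sqrt_sq_eq_abs]
  rcases le_or_gt 0 x with hx | hx
  · exact ⟨arccos y, by rw [hs, abs_of_nonneg hx], cos_arccos hy1 hy2⟩
  · refine ⟨-arccos y, ?_, by rw [cos_neg, cos_arccos hy1 hy2]⟩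
    rw [sin_neg, hs, abs_of_neg hx, neg_neg]

lemma sub_sq_eq_iff_eq_add_sqrt_or_eq_sub_sqrt {x w c : ℝ} (hc : 0 ≤ c) :
    (x - w) ^ 2 = c ↔ x = w + √c ∨ x = w - √c := by
  conv_lhs => rw [← sq_sqrt hc]
  rw [sq_eq_sq_iff_eq_or_eq_neg, sub_eq_iff_eq_add', sub_eq_iff_eq_add', ← sub_eq_add_neg]

section Equilibrium

variable {a w Ω f ρ : ℝ}

lemma equilibrium_iff_sin_cos_eq (hf : f ≠ 0) (hρ : ρ ≠ 0) {ψ : ℝ} :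
    (-a * ρ + f * sin ψ = 0 ∧ w - Ω + (f / ρ) * cos ψ = 0) ↔
      sin ψ = a * ρ / f ∧ cos ψ = (Ω - w) * ρ / f := by
  refine and_congr ?_ ?_
  · rw [eq_div_iff hf]
    constructor <;> intro h <;> linarith
  · rw [eq_div_iff hf, div_mul_eq_mul_div, add_div' _ _ _ hρ, div_eq_zero_iff, or_iff_left hρ]
    constructor <;> intro h <;> linarith

lemma div_sq_add_div_sq_eq_one_iff (hf : f ≠ 0) (hρ : ρ ≠ 0) :
    (a * ρ / f) ^ 2 + ((Ω - w) * ρ / f) ^ 2 = 1 ↔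
      a ^ 2 * ρ ^ 2 ≤ f ^ 2 ∧ (Ω - w) ^ 2 = f ^ 2 / ρ ^ 2 - a ^ 2 := by
  rw [div_pow, div_pow, ← add_div, div_eq_one_iff_eq (pow_ne_zero 2 hf),
    eq_sub_iff_add_eq, eq_div_iff (pow_ne_zero 2 hρ)]
  constructor
  · intro h
    exact ⟨by nlinarith [sq_nonneg ((Ω - w) * ρ)], by linarith⟩
  · rintro ⟨-, h⟩
    linarith

end Equilibrium

/-- For `ρ₀ > 0` there exists a phase `ψ₀` making `(ρ₀, ψ₀)` an
equilibrium of the co-rotating forced normal form iff `f² ≥ α(ρ₀)² ρ₀²` and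
`Ω = ω(ρ₀) ± √(f²/ρ₀² − α(ρ₀)²)`; moreover any such `ψ₀` satisfies
`sin ψ₀ = α(ρ₀) ρ₀ / f` (the closed-form frequency response curve). -/
theorem corotating_equilibrium_frequency_response
    (α ω : ℝ → ℝ) (f : ℝ) (hf : f > 0) (Ω : ℝ)
    (ρ₀ : ℝ) (hρ₀ : ρ₀ > 0) :
    ((∃ ψ₀ : ℝ, -α ρ₀ * ρ₀ + f * Real.sin ψ₀ = 0 ∧
        ω ρ₀ - Ω + (f / ρ₀) * Real.cos ψ₀ = 0) ↔
      (f ^ 2 ≥ (α ρ₀) ^ 2 * ρ₀ ^ 2 ∧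
        (Ω = ω ρ₀ + Real.sqrt (f ^ 2 / ρ₀ ^ 2 - (α ρ₀) ^ 2) ∨
         Ω = ω ρ₀ - Real.sqrt (f ^ 2 / ρ₀ ^ 2 - (α ρ₀) ^ 2)))) ∧
    (∀ ψ₀ : ℝ, -α ρ₀ * ρ₀ + f * Real.sin ψ₀ = 0 ∧
        ω ρ₀ - Ω + (f / ρ₀) * Real.cos ψ₀ = 0 →
      Real.sin ψ₀ = α ρ₀ * ρ₀ / f) := by
  have hequilibrium (ψ : ℝ) :=
    @equilibrium_iff_sin_cos_eq (α ρ₀) (ω ρ₀) Ω f ρ₀ hf.ne' hρ₀.ne' ψ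
  refine ⟨?_, fun ψ h => ((hequilibrium ψ).1 h).1⟩
  rw [exists_congr hequilibrium, exists_sin_cos_eq_iff,
    div_sq_add_div_sq_eq_one_iff hf.ne' hρ₀.ne', ge_iff_le]
  refine and_congr_right fun hle => sub_sq_eq_iff_eq_add_sqrt_or_eq_sub_sqrt ?_
  rw [sub_nonneg, le_div_iff₀ (by positivity)]
  linarith
end

section
/- Let α, ω : ℝ → ℝ, f > 0 and ρ₀ > 0. There exist Ω ∈ ℝ and ψ₀ ∈ ℝ such that (ρ₀, ψ₀) is an equilibrium of the co-rotating forced normal form if and only if |α(ρ₀)|·ρ₀ ≤ f. In other words, the set of amplitudes attainable as forced periodic responses for forcing amplitude f, over all forcing frequencies Ω, is exactly { ρ₀ > 0 : |α(ρ₀)|·ρ₀ ≤ f }. -/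
/-!
The phase equation can always be solved for the forcing frequency `Ω`, so an equilibrium of
amplitude `ρ₀` exists iff the amplitude equation `f sin ψ₀ = α(ρ₀) ρ₀` has a solution `ψ₀`,
i.e. iff `α(ρ₀) ρ₀` lies in the range `[-f, f]` of `f sin`.
-/

open Real

theorem Real.exists_mul_sin_eq_iff {f c : ℝ} : (∃ ψ, f * sin ψ = c) ↔ |c| ≤ |f| := by
  constructor
  · rintro ⟨ψ, rfl⟩
    rw [abs_mul]
    exact mul_le_of_le_one_right (abs_nonneg f) (abs_sin_le_one ψ)
  · intro hc
    rcases eq_or_ne f 0 with rfl | hf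
    · exact ⟨0, by simpa [eq_comm] using hc⟩
    have hcf : |c / f| ≤ 1 := by
      rwa [abs_div, div_le_one (abs_pos.mpr hf)]
    refine ⟨arcsin (c / f), ?_⟩
    rw [sin_arcsin (abs_le.mp hcf).1 (abs_le.mp hcf).2]
    field_simp

/-- For a fixed forcing amplitude `f > 0`, an amplitude `ρ₀ > 0`
is attainable as a forced periodic response for some forcing frequency `Ω`
iff `|α(ρ₀)| ρ₀ ≤ f`. -/
theorem corotating_equilibrium_attainable_amplitudes
    (α ω : ℝ → ℝ) (f : ℝ) (hf : f > 0)
    (ρ₀ : ℝ) (hρ₀ : ρ₀ > 0) :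
    (∃ (Ω : ℝ) (ψ₀ : ℝ), -α ρ₀ * ρ₀ + f * Real.sin ψ₀ = 0 ∧
        ω ρ₀ - Ω + (f / ρ₀) * Real.cos ψ₀ = 0) ↔
      |α ρ₀| * ρ₀ ≤ f := by
  calc
    _ ↔ ∃ ψ₀, f * sin ψ₀ = α ρ₀ * ρ₀ := by
      constructor
      · rintro ⟨Ω, ψ₀, hamplitude, -⟩
        exact ⟨ψ₀, by linarith⟩
      · rintro ⟨ψ₀, hamplitude⟩
        exact ⟨ω ρ₀ + f / ρ₀ * cos ψ₀, ψ₀, by linarith, by ring⟩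
    _ ↔ |α ρ₀ * ρ₀| ≤ |f| := exists_mul_sin_eq_iff
    _ ↔ |α ρ₀| * ρ₀ ≤ f := by rw [abs_mul, abs_of_pos hρ₀, abs_of_pos hf]
end

section
/- Let α, ω : ℝ → ℝ, f > 0, Ω ∈ ℝ, and let (ρ₀, ψ₀) with ρ₀ > 0 be an equilibrium of the co-rotating forced normal form such that the maximal-amplitude condition f = α(ρ₀)·ρ₀ holds. Then sin ψ₀ = 1 and cos ψ₀ = 0 (phase-lag quadrature, i.e. ψ₀ ≡ π/2 mod 2π), and the forcing frequency satisfies Ω = ω(ρ₀). Hence maximal-amplitude forced responses lie on the backbone curve Ω = ω(ρ) of the decaying unforced oscillations. -/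
/-- At an equilibrium `(ρ₀, ψ₀)` of the co-rotating forced normal
form satisfying the maximal-amplitude condition `f = α(ρ₀) ρ₀`, one has
phase-lag quadrature `sin ψ₀ = 1`, `cos ψ₀ = 0`, and `Ω = ω(ρ₀)`: maximal
forced responses lie on the backbone curve of the decaying oscillations. -/
theorem maximal_amplitude_phase_lag_quadrature
    (α ω : ℝ → ℝ) (f : ℝ) (hf : f > 0) (Ω : ℝ)
    (ρ₀ ψ₀ : ℝ) (hρ₀ : ρ₀ > 0)
    (heq1 : -α ρ₀ * ρ₀ + f * Real.sin ψ₀ = 0)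
    (heq2 : ω ρ₀ - Ω + (f / ρ₀) * Real.cos ψ₀ = 0)
    (hmax : f = α ρ₀ * ρ₀) :
    Real.sin ψ₀ = 1 ∧ Real.cos ψ₀ = 0 ∧ Ω = ω ρ₀ := by
  have hs : Real.sin ψ₀ = 1 := by
    have h : f * Real.sin ψ₀ = f := by nlinarith
    have := mul_left_cancel₀ (ne_of_gt hf) (h.trans (mul_one f).symm)
    exact this
  have hc : Real.cos ψ₀ = 0 := by
    have := Real.sin_sq_add_cos_sq ψ₀
    nlinarith
  refine ⟨hs, hc, ?_⟩
  rw [hc, mul_zero, add_zero] at heq2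
  linarith
end

section
/- Let α, ω : ℝ → ℝ with α(ρ) > 0 for all ρ > 0 and suppose ρ ↦ α(ρ)·ρ is strictly increasing on (0, ∞). Fix ρ* > 0 and set f = α(ρ*)·ρ* and Ω = ω(ρ*). Then (ρ*, π/2) is an equilibrium of the co-rotating forced normal form with these parameters f and Ω; moreover, for this forcing amplitude f and any forcing frequency Ω′ ∈ ℝ, every equilibrium (ρ₀, ψ₀) with ρ₀ > 0 of the co-rotating forced normal form satisfies ρ₀ ≤ ρ*. Thus ρ* is the maximal response amplitude attainable at forcing amplitude f, and it occurs at Ω = ω(ρ*). -/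
/-- If `α > 0` on `(0,∞)` and `ρ ↦ α(ρ)ρ` is strictly increasing
on `(0,∞)`, then for `f = α(ρ*)ρ*` and `Ω = ω(ρ*)` the point `(ρ*, π/2)` is an
equilibrium of the co-rotating forced normal form, and for this `f` and any
forcing frequency `Ω′` every equilibrium `(ρ₀, ψ₀)` with `ρ₀ > 0` satisfies
`ρ₀ ≤ ρ*`: the maximal response amplitude at forcing amplitude `f` is `ρ*`,
attained at `Ω = ω(ρ*)`. -/
theorem maximal_response_amplitude_on_backbone
    (α ω : ℝ → ℝ)
    (hαpos : ∀ ρ > 0, α ρ > 0)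
    (hmono : StrictMonoOn (fun ρ => α ρ * ρ) (Set.Ioi (0 : ℝ)))
    (ρstar : ℝ) (hρstar : ρstar > 0)
    (f Ω : ℝ) (hf : f = α ρstar * ρstar) (hΩ : Ω = ω ρstar) :
    (-α ρstar * ρstar + f * Real.sin (Real.pi / 2) = 0 ∧
      ω ρstar - Ω + (f / ρstar) * Real.cos (Real.pi / 2) = 0) ∧
    (∀ (Ω' : ℝ) (ρ₀ ψ₀ : ℝ), ρ₀ > 0 →
      -α ρ₀ * ρ₀ + f * Real.sin ψ₀ = 0 →
      ω ρ₀ - Ω' + (f / ρ₀) * Real.cos ψ₀ = 0 →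
      ρ₀ ≤ ρstar) := by
  have hfpos : 0 < f := hf ▸ mul_pos (hαpos ρstar hρstar) hρstar
  constructor
  · constructor
    · simp [hf, Real.sin_pi_div_two]
    · simp [hΩ, Real.cos_pi_div_two]
  · intro Ω' ρ₀ ψ₀ hρ₀ h1 _
    have h2 : α ρ₀ * ρ₀ = f * Real.sin ψ₀ := by linarith
    have h3 : α ρ₀ * ρ₀ ≤ α ρstar * ρstar := by
      rw [h2, ← hf]
      nlinarith [Real.sin_le_one ψ₀]
    by_contra h
    push_neg at h
    have := hmono (Set.mem_Ioi.mpr hρstar) (Set.mem_Ioi.mpr hρ₀) h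
    simp only at this
    linarith
end

section
/- Let α, ω : ℝ → ℝ be differentiable, f > 0, Ω ∈ ℝ, and define the planar vector field F(ρ, ψ) = ( −α(ρ)·ρ + f·sin ψ , ω(ρ) − Ω + (f/ρ)·cos ψ ) on (0, ∞) × ℝ. Let (ρ₀, ψ₀) with ρ₀ > 0 be an equilibrium of F. Then the Jacobian matrix DF(ρ₀, ψ₀) has trace equal to −( 2·α(ρ₀) + α′(ρ₀)·ρ₀ ) and determinant equal to α(ρ₀)·( α(ρ₀) + α′(ρ₀)·ρ₀ ) + (Ω − ω(ρ₀))² − ρ₀·ω′(ρ₀)·(Ω − ω(ρ₀)). In particular, the stability of the corresponding forced periodic response is determined by these two quantities. -/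
/-- At an equilibrium `(ρ₀, ψ₀)` of the co-rotating forced normal
form `F(ρ,ψ) = (−α(ρ)ρ + f sin ψ, ω(ρ) − Ω + (f/ρ) cos ψ)`, the Jacobian
matrix has trace `−(2α(ρ₀) + α′(ρ₀)ρ₀)` and determinant
`α(ρ₀)(α(ρ₀) + α′(ρ₀)ρ₀) + (Ω − ω(ρ₀))² − ρ₀ ω′(ρ₀)(Ω − ω(ρ₀))`, which
determine the stability of the corresponding forced periodic response. -/
theorem corotating_equilibrium_jacobian_trace_det
    (α ω : ℝ → ℝ) (hα : Differentiable ℝ α) (hω : Differentiable ℝ ω)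
    (f : ℝ) (hf : f > 0) (Ω : ℝ)
    (ρ₀ ψ₀ : ℝ) (hρ₀ : ρ₀ > 0)
    (heq1 : -α ρ₀ * ρ₀ + f * Real.sin ψ₀ = 0)
    (heq2 : ω ρ₀ - Ω + (f / ρ₀) * Real.cos ψ₀ = 0)
    (a11 a12 a21 a22 : ℝ)
    (ha11 : a11 = deriv (fun ρ => -α ρ * ρ + f * Real.sin ψ₀) ρ₀)
    (ha12 : a12 = deriv (fun ψ => -α ρ₀ * ρ₀ + f * Real.sin ψ) ψ₀)
    (ha21 : a21 = deriv (fun ρ => ω ρ - Ω + (f / ρ) * Real.cos ψ₀) ρ₀)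
    (ha22 : a22 = deriv (fun ψ => ω ρ₀ - Ω + (f / ρ₀) * Real.cos ψ) ψ₀) :
    a11 + a22 = -(2 * α ρ₀ + deriv α ρ₀ * ρ₀) ∧
    a11 * a22 - a12 * a21 =
      α ρ₀ * (α ρ₀ + deriv α ρ₀ * ρ₀) + (Ω - ω ρ₀) ^ 2
        - ρ₀ * deriv ω ρ₀ * (Ω - ω ρ₀) := by
  have hρne : ρ₀ ≠ 0 := ne_of_gt hρ₀
  -- equilibrium relations
  have hs : f * Real.sin ψ₀ = α ρ₀ * ρ₀ := by linarith
  have hc : f * Real.cos ψ₀ = (Ω - ω ρ₀) * ρ₀ := by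
    have := heq2
    field_simp at this
    nlinarith [this]
  -- a11
  have h11 : HasDerivAt (fun ρ => -α ρ * ρ + f * Real.sin ψ₀)
      ((-deriv α ρ₀) * ρ₀ + (-α ρ₀) * 1) ρ₀ :=
    (((hα ρ₀).hasDerivAt.neg).mul (hasDerivAt_id ρ₀)).add_const _
  have e11 : a11 = -deriv α ρ₀ * ρ₀ - α ρ₀ := by
    rw [ha11, h11.deriv]; ring
  -- a12
  have h12 : HasDerivAt (fun ψ => -α ρ₀ * ρ₀ + f * Real.sin ψ)
      (f * Real.cos ψ₀) ψ₀ :=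
    ((Real.hasDerivAt_sin ψ₀).const_mul f).const_add _
  have e12 : a12 = f * Real.cos ψ₀ := by rw [ha12, h12.deriv]
  -- a21
  have h21 : HasDerivAt (fun ρ => ω ρ - Ω + (f / ρ) * Real.cos ψ₀)
      (deriv ω ρ₀ + ((0 * ρ₀ - f * 1) / ρ₀ ^ 2) * Real.cos ψ₀) ρ₀ := by
    exact (((hω ρ₀).hasDerivAt.sub_const Ω).add
      ((((hasDerivAt_const ρ₀ f).div (hasDerivAt_id ρ₀) hρne)).mul_const _))
  have e21 : a21 = deriv ω ρ₀ - f * Real.cos ψ₀ / ρ₀ ^ 2 := by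
    rw [ha21, h21.deriv]; ring
  -- a22
  have h22 : HasDerivAt (fun ψ => ω ρ₀ - Ω + (f / ρ₀) * Real.cos ψ)
      ((f / ρ₀) * (-Real.sin ψ₀)) ψ₀ :=
    ((Real.hasDerivAt_cos ψ₀).const_mul (f / ρ₀)).const_add _
  have e22 : a22 = -(α ρ₀) := by
    rw [ha22, h22.deriv]
    field_simp
    nlinarith [hs]
  constructor
  · rw [e11, e22]; ring
  · rw [e11, e22, e12, e21, hc]
    field_simp
    ring
end
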